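/- arXiv:1904.05269 — 2 statements merged into one kernel-verified Lean document; each statement's English description precedes it below -/
import Mathlib

section
/- Every BFS-layering of a connected chordal graph is shadow-complete. -/
/-!
Suppose two shadow vertices `x, y` of a component `C` of `G[V_i ∪ V_{i+1} ∪ ⋯]` are not adjacent.
They are joined by a walk through `C`, and by a walk through the layers below `V_{i-1}` (follow
shortest paths to `r`). Shortest paths inside these two regions are chordless, the regions meet
only in `x` and `y`, and no edge joins them since their layers differ by at least two. So the two
paths close up to a chordless cycle of length at least four.
-/

/-- A graph is *chordal* if every cycle of length at least `4` has a chord: two vertices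
of the cycle that are adjacent in the graph but not along an edge of the cycle. -/
def SimpleGraph.IsChordal {V : Type*} (G : SimpleGraph V) : Prop :=
  ∀ ⦃v : V⦄ (c : G.Walk v v), c.IsCycle → 4 ≤ c.length →
    ∃ u w : V, u ∈ c.support ∧ w ∈ c.support ∧ G.Adj u w ∧ s(u, w) ∉ c.edges

namespace SimpleGraph

variable {V W : Type*} {G : SimpleGraph V} {u v : V}

namespace Walk

lemma mem_edges_of_length_eq_one {p : G.Walk u v} (h : p.length = 1) : s(u, v) ∈ p.edges := by
  cases p with
  | nil => simp at h
  | cons hadj q =>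
    obtain rfl := eq_of_length_eq_zero (by simpa using h : q.length = 0)
    simp

lemma IsPath.start_notMem_support_tail {p : G.Walk u v} (hp : p.IsPath) :
    u ∉ p.support.tail := by
  have h := hp.support_nodup
  rw [← p.cons_tail_support] at h
  exact (List.nodup_cons.mp h).1

theorem isChordless_of_length_eq_dist {p : G.Walk u v} (hp : p.length = G.dist u v) :
    p.IsChordless := by
  classical
  have hsub {a b : V} (q : G.Walk a b) (hq : q.IsSubwalk p) (hab : G.Adj a b) :
      s(a, b) ∈ p.edges :=
    hq.edges_subset <| mem_edges_of_length_eq_one <|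
      (length_eq_dist_of_subwalk hp hq).trans (dist_eq_one_iff_adj.mpr hab)
  rw [isChordless_iff_forall_mem_edges]
  intro a b ha hb hab
  rw [← p.take_spec ha, mem_support_append_iff] at hb
  rcases hb with hb | hb
  · rw [Sym2.eq_swap]
    exact hsub _ (((p.takeUntil a ha).isSubwalk_dropUntil hb).trans (p.isSubwalk_takeUntil ha))
      hab.symm
  · exact hsub _ (((p.dropUntil a ha).isSubwalk_takeUntil hb).trans (p.isSubwalk_dropUntil ha))
      hab

theorem IsChordless.map {G' : SimpleGraph W} (f : G ↪g G') {p : G.Walk u v}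
    (hp : p.IsChordless) : (p.map f.toHom).IsChordless := by
  rw [isChordless_iff_forall_mem_edges] at hp ⊢
  intro a b ha hb hab
  rw [support_map, List.mem_map] at ha hb
  obtain ⟨a, ha, rfl⟩ := ha
  obtain ⟨b, hb, rfl⟩ := hb
  rw [edges_map]
  exact List.mem_map_of_mem (hp ha hb (f.map_adj_iff.mp hab))

lemma mem_of_mem_support_map_induce {s : Set V} {a b : s} (q : (G.induce s).Walk a b) {x : V}
    (hx : x ∈ (q.map (Embedding.induce s).toHom).support) : x ∈ s := by
  rw [support_map, List.mem_map] at hx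
  obtain ⟨x, -, rfl⟩ := hx
  exact x.2

theorem exists_isPath_isChordless_of_support_subset {s : Set V} (p : G.Walk u v)
    (hp : ∀ x ∈ p.support, x ∈ s) :
    ∃ q : G.Walk u v, q.IsPath ∧ q.IsChordless ∧ ∀ x ∈ q.support, x ∈ s := by
  obtain ⟨q, hq⟩ := (p.induce s hp).reachable.exists_walk_length_eq_dist
  refine ⟨q.map (Embedding.induce s).toHom,
    (q.isPath_of_length_eq_dist hq).map Subtype.val_injective,
    (isChordless_of_length_eq_dist hq).map _, fun _ => q.mem_of_mem_support_map_induce⟩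

end Walk

lemma exists_walk_of_reachable_induce {s : Set V} {a b : s} (h : (G.induce s).Reachable a b) :
    ∃ p : G.Walk a b, ∀ x ∈ p.support, x ∈ s := by
  obtain ⟨p⟩ := h
  exact ⟨p.map (Embedding.induce s).toHom, fun _ => p.mem_of_mem_support_map_induce⟩

lemma Reachable.exists_walk_dist_lt {r : V} (h : G.Reachable r v) :
    ∃ p : G.Walk v r, ∀ w ∈ p.support, w = v ∨ G.dist r w < G.dist r v := by
  classical
  obtain ⟨p, hp⟩ := h.exists_walk_length_eq_dist
  refine ⟨p.reverse, fun w hw => or_iff_not_imp_left.mpr fun hwv => ?_⟩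
  rw [Walk.support_reverse, List.mem_reverse] at hw
  calc G.dist r w = (p.takeUntil w hw).length :=
        (length_eq_dist_of_subwalk hp (p.isSubwalk_takeUntil hw)).symm
    _ < p.length := Walk.length_takeUntil_lt_length hw hwv
    _ = G.dist r v := hp

lemma Connected.exists_walk_support_subset_dist_lt (hconn : G.Connected) {r x y : V} {d : ℕ}
    (hx : G.dist r x = d) (hy : G.dist r y = d) :
    ∃ p : G.Walk x y, ∀ v ∈ p.support, v ∈ insert x (insert y {w | G.dist r w < d}) := by
  obtain ⟨px, hpx⟩ := (hconn r x).exists_walk_dist_lt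
  obtain ⟨py, hpy⟩ := (hconn r y).exists_walk_dist_lt
  refine ⟨px.append py.reverse, fun v hv => ?_⟩
  rw [Walk.mem_support_append_iff, Walk.support_reverse, List.mem_reverse] at hv
  rcases hv with hv | hv
  · rcases hpx v hv with rfl | h
    · exact Or.inl rfl
    · exact Or.inr (Or.inr (hx ▸ h))
  · rcases hpy v hv with rfl | h
    · exact Or.inr (Or.inl rfl)
    · exact Or.inr (Or.inr (hy ▸ h))

namespace IsChordal

theorem not_isChordless (hG : G.IsChordal) {c : G.Walk v v} (hc : c.IsCycle)
    (hlen : 4 ≤ c.length) : ¬c.IsChordless := by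
  obtain ⟨a, b, ha, hb, hab, hnot⟩ := hG c hc hlen
  exact fun h => hnot (h.mem_edges ha hb hab)

theorem adj_of_isChordless_paths (hG : G.IsChordal) {x y : V} (hxy : x ≠ y)
    {p q : G.Walk x y} (hp : p.IsPath) (hq : q.IsPath) (hpc : p.IsChordless)
    (hqc : q.IsChordless)
    (hsep : ∀ a ∈ p.support, ∀ b ∈ q.support, a ≠ x → a ≠ y → b ≠ x → b ≠ y →
      a ≠ b ∧ ¬G.Adj a b) :
    G.Adj x y := by
  by_contra hnadj
  have hlen (r : G.Walk x y) : 2 ≤ r.length :=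
    (r.reachable.one_lt_dist_of_ne_of_not_adj hxy hnadj).trans_le (dist_le r)
  have hinner : p.support.tail.Disjoint q.reverse.support.tail := by
    intro a hap haq
    have hax : a ≠ x := fun h => hp.start_notMem_support_tail (h ▸ hap)
    have hay : a ≠ y := fun h => hq.reverse.start_notMem_support_tail (h ▸ haq)
    have haq' : a ∈ q.support := by
      simpa [Walk.support_reverse] using List.mem_of_mem_tail haq
    exact (hsep a (List.mem_of_mem_tail hap) a haq' hax hay hax hay).1 rfl
  have hcyc := hp.isCycle_append hq.reverse hinner (Or.inl (hlen p))
  refine hG.not_isChordless hcyc (by simpa using Nat.add_le_add (hlen p) (hlen q)) ?_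
  have hcross {a b : V} (ha : a ∈ p.support) (hb : b ∈ q.support) (hab : G.Adj a b) :
      s(a, b) ∈ p.edges ∨ s(a, b) ∈ q.edges := by
    by_cases hax : a = x ∨ a = y
    · right
      refine hqc.mem_edges ?_ hb hab
      rcases hax with rfl | rfl <;> simp
    by_cases hbx : b = x ∨ b = y
    · left
      refine hpc.mem_edges ha ?_ hab
      rcases hbx with rfl | rfl <;> simp
    push Not at hax hbx
    exact absurd hab (hsep a ha b hb hax.1 hax.2 hbx.1 hbx.2).2
  rw [Walk.isChordless_iff_forall_mem_edges]
  intro a b ha hb hab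
  simp only [Walk.edges_append, Walk.edges_reverse, List.mem_append, List.mem_reverse,
    Walk.mem_support_append_iff, Walk.support_reverse] at ha hb ⊢
  rcases ha with ha | ha <;> rcases hb with hb | hb
  · exact Or.inl (hpc.mem_edges ha hb hab)
  · exact hcross ha hb hab
  · rw [Sym2.eq_swap]
    exact hcross hb ha hab.symm
  · exact Or.inr (hqc.mem_edges ha hb hab)

theorem adj_of_walks_through_separated_sets (hG : G.IsChordal) {A B : Set V}
    (hAB : Disjoint A B) (hsep : ∀ a ∈ A, ∀ b ∈ B, ¬G.Adj a b) {x y : V} (hxy : x ≠ y)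
    (p q : G.Walk x y) (hp : ∀ v ∈ p.support, v ∈ insert x (insert y A))
    (hq : ∀ v ∈ q.support, v ∈ insert x (insert y B)) :
    G.Adj x y := by
  obtain ⟨p', hp', hpc, hps⟩ := p.exists_isPath_isChordless_of_support_subset hp
  obtain ⟨q', hq', hqc, hqs⟩ := q.exists_isPath_isChordless_of_support_subset hq
  refine hG.adj_of_isChordless_paths hxy hp' hq' hpc hqc
    fun a ha b hb hax hay hbx hby => ?_
  have haA : a ∈ A := by simpa [hax, hay] using hps a ha
  have hbB : b ∈ B := by simpa [hbx, hby] using hqs b hb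
  exact ⟨hAB.ne_of_mem haA hbB, hsep a haA b hbB⟩

end IsChordal

end SimpleGraph

open SimpleGraph

theorem bfs_layering_shadow_complete_general (V : Type) (G : SimpleGraph V)
    (hconn : G.Connected) (hchord : G.IsChordal) (r : V) (i : ℕ)
    (C : (G.induce {v : V | i ≤ G.dist r v}).ConnectedComponent) :
    G.IsClique {u : V | G.dist r u = i - 1 ∧
      ∃ v : {v : V | i ≤ G.dist r v},
        (G.induce {v : V | i ≤ G.dist r v}).connectedComponentMk v = C ∧ G.Adj u ↑v} := by
  rintro x ⟨hdx, vx, hvx, hx⟩ y ⟨hdy, vy, hvy, hy⟩ hxy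
  obtain ⟨p, hp⟩ := hconn.exists_walk_support_subset_dist_lt hdx hdy
  obtain ⟨w, hw⟩ := exists_walk_of_reachable_induce (ConnectedComponent.exact (hvx.trans hvy.symm))
  refine hchord.adj_of_walks_through_separated_sets (A := {v | G.dist r v < i - 1})
    (B := {v | i ≤ G.dist r v}) ?_ ?_ hxy p ((w.cons hx).concat hy.symm) hp ?_
  · exact Set.disjoint_left.mpr fun v h1 h2 => by simp only [Set.mem_ofPred_eq] at h1 h2; omega
  · intro a ha b hb hab
    simp only [Set.mem_ofPred_eq] at ha hb
    rcases hab.diff_dist_adj (u := r) with h | h | h <;> omega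
  · intro v hv
    rw [Walk.support_concat, Walk.support_cons, List.mem_append, List.mem_cons,
      List.mem_singleton] at hv
    rcases hv with (rfl | hv) | rfl
    · exact Or.inl rfl
    · exact Or.inr (Or.inr (hw v hv))
    · exact Or.inr (Or.inl rfl)

/-- **Lemma (Kündgen–Pelsmajer; Dujmović–Morin–Wood).** Every BFS-layering of a connected
chordal graph is shadow-complete: for every `i ≥ 1` and every connected component `C` of
the subgraph induced by the vertices at distance at least `i` from the root `r`, the
shadow of `C` (the set of vertices at distance `i - 1` from `r` adjacent to some vertex
of `C`) is a clique. -/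
theorem bfs_layering_shadow_complete (V : Type) [Fintype V] (G : SimpleGraph V)
    (hconn : G.Connected) (hchord : G.IsChordal) (r : V) (i : ℕ) (hi : 1 ≤ i)
    (C : (G.induce {v : V | i ≤ G.dist r v}).ConnectedComponent) :
    G.IsClique {u : V | G.dist r u = i - 1 ∧
      ∃ v : {v : V | i ≤ G.dist r v},
        (G.induce {v : V | i ≤ G.dist r v}).connectedComponentMk v = C ∧ G.Adj u ↑v} :=
  bfs_layering_shadow_complete_general V G hconn hchord r i C
end

section
/- Let H be a graph having an ℓ-colouring φ_2 such that every φ_2-repetitive lazy walk in H is boring. Then for every graph G, π*(G ⊠ H) ≤ ℓ·π*(G). -/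
/-- A *lazy walk* in `G` is a sequence of vertices in which any two consecutive vertices
are equal or adjacent. -/
def SimpleGraph.IsLazyWalk {V : Type*} (G : SimpleGraph V) (l : List V) : Prop :=
  l.Chain' fun a b => a = b ∨ G.Adj a b

/-- A colouring `φ` of `G` is *strongly nonrepetitive* if every `φ`-repetitive lazy walk
`v₀, …, v₂ₖ₋₁` (with `k ≥ 1`, repetitive meaning the first half of the colour sequence
equals the second half) has `vᵢ = vᵢ₊ₖ` for some `i < k`. -/
def SimpleGraph.IsStronglyNonrepetitiveColouring {V α : Type*} (G : SimpleGraph V)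
    (φ : V → α) : Prop :=
  ∀ (l : List V) (k : ℕ), G.IsLazyWalk l → 0 < k → l.length = 2 * k →
    (l.map φ).take k = (l.map φ).drop k → ∃ i < k, l[i]? = l[i + k]?

/-- `π*(G)`: the least `n` such that `G` has a strongly nonrepetitive colouring with
`n` colours. -/
noncomputable def SimpleGraph.strongNonrepChromNum {V : Type*} (G : SimpleGraph V) : ℕ :=
  sInf {n : ℕ | ∃ φ : V → Fin n, G.IsStronglyNonrepetitiveColouring φ}

/-- `φ` is a colouring of `G` all of whose `φ`-repetitive lazy walks `v₀, …, v₂ₖ₋₁` are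
*boring*, i.e. satisfy `vᵢ = vᵢ₊ₖ` for all `i < k`. -/
def SimpleGraph.LazyWalksBoring {V α : Type*} (G : SimpleGraph V) (φ : V → α) : Prop :=
  ∀ (l : List V) (k : ℕ), G.IsLazyWalk l → l.length = 2 * k →
    (l.map φ).take k = (l.map φ).drop k → ∀ i < k, l[i]? = l[i + k]?

/-- The strong product `G ⊠ H`: distinct vertices `(v, x)` and `(w, y)` are adjacent iff
(`v = w` or `vw ∈ E(G)`) and (`x = y` or `xy ∈ E(H)`). -/
def SimpleGraph.strongProd {α β : Type*} (G : SimpleGraph α) (H : SimpleGraph β) :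
    SimpleGraph (α × β) where
  Adj x y := x ≠ y ∧ (x.1 = y.1 ∨ G.Adj x.1 y.1) ∧ (x.2 = y.2 ∨ H.Adj x.2 y.2)
  symm := by
    constructor
    rintro x y ⟨h1, h2, h3⟩
    refine ⟨h1.symm, ?_, ?_⟩
    · rcases h2 with h | h
      exacts [Or.inl h.symm, Or.inr h.symm]
    · rcases h3 with h | h
      exacts [Or.inl h.symm, Or.inr h.symm]
  loopless := by constructor; rintro x ⟨h1, -, -⟩; exact h1 rfl

/-!
Colour `(v, x)` by the pair `(φ₁ v, φ₂ x)`, where `φ₁` is an optimal strongly nonrepetitive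
colouring of `G`. Both projections of a lazy walk in `G ⊠ H` are lazy walks, and a repetitive
walk in the product projects to repetitive walks in `G` and `H`. The walk in `H` is boring,
so it agrees with itself shifted by `k` at every index, in particular at the index `i` where
the walk in `G` does; hence so does the walk in `G ⊠ H`.
-/

namespace List

variable {α β γ : Type*}

theorem take_map_comp_eq_drop_map_comp {l : List α} {k : ℕ} {f : α → β} (g : β → γ)
    (h : (l.map f).take k = (l.map f).drop k) :
    (l.map (g ∘ f)).take k = (l.map (g ∘ f)).drop k := by
  simpa only [← List.map_map, List.map_take, List.map_drop] using congrArg (List.map g) h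

end List

theorem Option.eq_of_map_fst_eq_of_map_snd_eq {α β : Type*} {o o' : Option (α × β)}
    (h₁ : o.map Prod.fst = o'.map Prod.fst) (h₂ : o.map Prod.snd = o'.map Prod.snd) :
    o = o' := by
  cases o <;> cases o' <;> simp_all [Prod.ext_iff]

namespace SimpleGraph

variable {V W α β : Type*} {G : SimpleGraph V} {H : SimpleGraph W}

theorem IsLazyWalk.map {G' : SimpleGraph W} {f : V → W}
    (hf : ∀ a b, G.Adj a b → f a = f b ∨ G'.Adj (f a) (f b)) {l : List V}
    (hl : G.IsLazyWalk l) : G'.IsLazyWalk (l.map f) := by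
  rw [IsLazyWalk, List.Chain', List.isChain_map]
  refine hl.imp ?_
  rintro a b (rfl | hab)
  exacts [Or.inl rfl, hf a b hab]

theorem IsLazyWalk.map_fst {l : List (V × W)} (hl : (G.strongProd H).IsLazyWalk l) :
    G.IsLazyWalk (l.map Prod.fst) :=
  hl.map fun _ _ (h : (G.strongProd H).Adj _ _) => h.2.1

theorem IsLazyWalk.map_snd {l : List (V × W)} (hl : (G.strongProd H).IsLazyWalk l) :
    H.IsLazyWalk (l.map Prod.snd) :=
  hl.map fun _ _ (h : (G.strongProd H).Adj _ _) => h.2.2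

theorem isStronglyNonrepetitiveColouring_id : G.IsStronglyNonrepetitiveColouring id := by
  intro l k _ hk _ hrep
  refine ⟨0, hk, ?_⟩
  have h₀ := congrArg (·[0]?) hrep
  simp only [List.getElem?_take_of_lt hk, List.getElem?_drop] at h₀
  simpa using h₀

theorem IsStronglyNonrepetitiveColouring.comp_injective {φ : V → α} {f : α → β}
    (hφ : G.IsStronglyNonrepetitiveColouring φ) (hf : Function.Injective f) :
    G.IsStronglyNonrepetitiveColouring (f ∘ φ) := by
  intro l k hl hk hlen hrep
  refine hφ l k hl hk hlen (List.map_injective_iff.2 hf ?_)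
  simpa only [List.map_take, List.map_drop, List.map_map] using hrep

theorem isStronglyNonrepetitiveColouring_of_injective {φ : V → α}
    (hφ : Function.Injective φ) : G.IsStronglyNonrepetitiveColouring φ :=
  isStronglyNonrepetitiveColouring_id.comp_injective hφ

theorem exists_isStronglyNonrepetitiveColouring_strongNonrepChromNum [Finite V]
    (G : SimpleGraph V) :
    ∃ φ : V → Fin G.strongNonrepChromNum, G.IsStronglyNonrepetitiveColouring φ := by
  obtain ⟨n, ⟨e⟩⟩ := Finite.exists_equiv_fin V
  exact Nat.sInf_mem (s := {n | ∃ φ : V → Fin n, G.IsStronglyNonrepetitiveColouring φ})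
    ⟨n, e, isStronglyNonrepetitiveColouring_of_injective e.injective⟩

theorem IsStronglyNonrepetitiveColouring.strongProd {φ₁ : V → α} {φ₂ : W → β}
    (hφ₁ : G.IsStronglyNonrepetitiveColouring φ₁) (hφ₂ : H.LazyWalksBoring φ₂) :
    (G.strongProd H).IsStronglyNonrepetitiveColouring (Prod.map φ₁ φ₂) := by
  intro l k hl hk hlen hrep
  have hlen₁ : (l.map Prod.fst).length = 2 * k := by simpa using hlen
  have hlen₂ : (l.map Prod.snd).length = 2 * k := by simpa using hlen
  have hrep₁ : ((l.map Prod.fst).map φ₁).take k = ((l.map Prod.fst).map φ₁).drop k := by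
    simpa only [List.map_map, Prod.map_fst'] using
      List.take_map_comp_eq_drop_map_comp Prod.fst hrep
  have hrep₂ : ((l.map Prod.snd).map φ₂).take k = ((l.map Prod.snd).map φ₂).drop k := by
    simpa only [List.map_map, Prod.map_snd'] using
      List.take_map_comp_eq_drop_map_comp Prod.snd hrep
  obtain ⟨i, hi, hG⟩ := hφ₁ _ k hl.map_fst hk hlen₁ hrep₁
  have hH := hφ₂ _ k hl.map_snd hlen₂ hrep₂ i hi
  rw [List.getElem?_map, List.getElem?_map] at hG hH
  exact ⟨i, hi, Option.eq_of_map_fst_eq_of_map_snd_eq hG hH⟩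

end SimpleGraph

theorem strongNonrepChromNum_strongProd_le_general (V W : Type) [Fintype V]
    (G : SimpleGraph V) (H : SimpleGraph W) (ℓ : ℕ) (φ₂ : W → Fin ℓ)
    (hφ₂ : H.LazyWalksBoring φ₂) :
    (G.strongProd H).strongNonrepChromNum ≤ ℓ * G.strongNonrepChromNum := by
  obtain ⟨φ₁, hφ₁⟩ := G.exists_isStronglyNonrepetitiveColouring_strongNonrepChromNum
  rw [mul_comm]
  exact Nat.sInf_le ⟨finProdFinEquiv ∘ Prod.map φ₁ φ₂,
    (hφ₁.strongProd hφ₂).comp_injective finProdFinEquiv.injective⟩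

/-- **Lemma 6.** Let `H` be a graph with an `ℓ`-colouring `φ₂` such that every
`φ₂`-repetitive lazy walk in `H` is boring. Then for every graph `G`,
`π*(G ⊠ H) ≤ ℓ · π*(G)`. -/
theorem strongNonrepChromNum_strongProd_le (V W : Type) [Fintype V] [Fintype W]
    (G : SimpleGraph V) (H : SimpleGraph W) (ℓ : ℕ) (φ₂ : W → Fin ℓ)
    (hφ₂ : H.LazyWalksBoring φ₂) :
    (G.strongProd H).strongNonrepChromNum ≤ ℓ * G.strongNonrepChromNum :=
  strongNonrepChromNum_strongProd_le_general V W G H ℓ φ₂ hφ₂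
end
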